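/- For every positive integer n and every feasible vector (t₀, …, t_{2n}) for the cap set linear program, there exists a feasible vector (t₀', …, t_{2n}') with t_{2n}' = 0 and 3·∑_{i=0}^{2n} f_{n,i}·t_i' ≤ 3·∑_{i=0}^{2n} f_{n,i}·t_i; moreover if t_{2n} > 0 the inequality is strict. -/

import Mathlib

/-- `f_{n,i}`: the coefficient of `x^i` in `(1 + x + x²)^n`. -/
noncomputable def coeff3 (n i : ℕ) : ℕ :=
  (((1 + Polynomial.X + Polynomial.X ^ 2 : Polynomial ℕ)) ^ n).coeff i

/-- A vector `(t₀, …, t_{2n})` (given as a function on `ℕ`) is feasible for the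
cap set linear program if all its entries are nonnegative and
`t_i + t_j + t_k ≥ 1` whenever `i + j + k ≤ 2n`. -/
def LPFeasible (n : ℕ) (t : ℕ → ℝ) : Prop :=
  (∀ i, i ≤ 2 * n → 0 ≤ t i) ∧
  (∀ i j k : ℕ, i + j + k ≤ 2 * n → 1 ≤ t i + t j + t k)

/-- The objective value `3 ∑_{i=0}^{2n} f_{n,i} t_i` of the cap set linear program. -/
noncomputable def LPObj (n : ℕ) (t : ℕ → ℝ) : ℝ :=
  3 * ∑ i ∈ Finset.range (2 * n + 1), (coeff3 n i : ℝ) * t i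

/-!
Given a feasible `t`, set `t_{2n} := 0` and raise `t_0` to `max t_0 (1/2)`. The only constraints
involving the index `2n` are those with `(i, j, k)` a permutation of `(0, 0, 2n)`, and these
remain satisfied since `2 t_0 ≥ 1`. Both `f_{n,0}` and `f_{n,2n}` equal `1`, and the constraint
`2 t_0 + t_{2n} ≥ 1` shows that `t_0` is raised by at most `t_{2n} / 2`, so the objective drops
by at least `(3/2) t_{2n}`.
-/

open Finset

lemma coeff3_zero (n : ℕ) : coeff3 n 0 = 1 := by
  simp [coeff3, Polynomial.coeff_zero_eq_eval_zero]

lemma coeff3_two_mul (n : ℕ) : coeff3 n (2 * n) = 1 := by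
  have hp : (1 + Polynomial.X + Polynomial.X ^ 2 : Polynomial ℕ).Monic := by monicity!
  have hd : (1 + Polynomial.X + Polynomial.X ^ 2 : Polynomial ℕ).natDegree = 2 := by
    compute_degree!
  have hlead := (hp.pow n).coeff_natDegree
  rw [hp.natDegree_pow, hd] at hlead
  simpa [coeff3, mul_comm] using hlead

lemma LPObj_update (n : ℕ) (t : ℕ → ℝ) {i : ℕ} (hi : i ≤ 2 * n) (a : ℝ) :
    LPObj n (Function.update t i a) = LPObj n t + 3 * coeff3 n i * (a - t i) := by
  have hmem : i ∈ range (2 * n + 1) := mem_range.2 (by omega)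
  have hrest : ∑ j ∈ (range (2 * n + 1)).erase i, (coeff3 n j : ℝ) * Function.update t i a j
      = ∑ j ∈ (range (2 * n + 1)).erase i, (coeff3 n j : ℝ) * t j :=
    sum_congr rfl fun j hj => by rw [Function.update_of_ne (ne_of_mem_erase hj)]
  unfold LPObj
  rw [← add_sum_erase _ _ hmem, ← add_sum_erase _ _ hmem, hrest, Function.update_self]
  ring

noncomputable def clearTop (n : ℕ) (t : ℕ → ℝ) : ℕ → ℝ :=
  Function.update (Function.update t 0 (max (t 0) (1 / 2))) (2 * n) 0

section clearTop

variable {n : ℕ} {t : ℕ → ℝ}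

@[simp]
lemma clearTop_two_mul : clearTop n t (2 * n) = 0 := Function.update_self ..

lemma clearTop_zero (hn : 0 < n) : clearTop n t 0 = max (t 0) (1 / 2) := by
  rw [clearTop, Function.update_of_ne (by omega), Function.update_self]

lemma le_clearTop {i : ℕ} (hi : i ≠ 2 * n) : t i ≤ clearTop n t i := by
  rw [clearTop, Function.update_of_ne hi]
  rcases eq_or_ne i 0 with rfl | hi0
  · simp
  · rw [Function.update_of_ne hi0]

lemma LPObj_clearTop (hn : 0 < n) :
    LPObj n (clearTop n t) = LPObj n t + 3 * (max (t 0) (1 / 2) - t 0) - 3 * t (2 * n) := by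
  rw [clearTop, LPObj_update _ _ le_rfl, LPObj_update _ _ (Nat.zero_le _),
    Function.update_of_ne (by omega), coeff3_zero, coeff3_two_mul]
  push_cast
  ring

lemma lpFeasible_clearTop (hn : 0 < n) (ht : LPFeasible n t) :
    LPFeasible n (clearTop n t) := by
  obtain ⟨hnonneg, hsum⟩ := ht
  have h0 : 1 / 2 ≤ clearTop n t 0 := clearTop_zero hn ▸ le_max_right _ _
  have corner : ∀ a b, a + b + 2 * n ≤ 2 * n →
      1 ≤ clearTop n t a + clearTop n t b + clearTop n t (2 * n) := by
    intro a b hab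
    obtain ⟨rfl, rfl⟩ : a = 0 ∧ b = 0 := by omega
    rw [clearTop_two_mul]
    linarith
  refine ⟨fun i hi => ?_, fun i j k hijk => ?_⟩
  · rcases eq_or_ne i (2 * n) with rfl | hi'
    · simp
    · exact (hnonneg i hi).trans (le_clearTop hi')
  · rcases eq_or_ne i (2 * n) with rfl | hi
    · linarith [corner j k (by omega)]
    rcases eq_or_ne j (2 * n) with rfl | hj
    · linarith [corner i k (by omega)]
    rcases eq_or_ne k (2 * n) with rfl | hk
    · exact corner i j hijk
    linarith [hsum i j k hijk, le_clearTop (t := t) hi, le_clearTop (t := t) hj,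
      le_clearTop (t := t) hk]

lemma LPObj_clearTop_add_le (hn : 0 < n) (ht : LPFeasible n t) :
    LPObj n (clearTop n t) + 3 / 2 * t (2 * n) ≤ LPObj n t := by
  have hcorner : 1 ≤ t 0 + t 0 + t (2 * n) := ht.2 0 0 (2 * n) (by omega)
  have htop : 0 ≤ t (2 * n) := ht.1 _ le_rfl
  have hraise : max (t 0) (1 / 2) - t 0 ≤ t (2 * n) / 2 := by
    rcases le_total (t 0) (1 / 2) with h | h
    · rw [max_eq_right h]; linarith
    · rw [max_eq_left h]; linarith
  rw [LPObj_clearTop hn]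
  linarith

end clearTop

/-- Any feasible vector can be improved to one with `t_{2n} = 0`, strictly if
`t_{2n} > 0`. -/
theorem lp_improve_last (n : ℕ) (hn : 0 < n) (t : ℕ → ℝ) (ht : LPFeasible n t) :
    ∃ t' : ℕ → ℝ, LPFeasible n t' ∧ t' (2 * n) = 0 ∧ LPObj n t' ≤ LPObj n t ∧
      (0 < t (2 * n) → LPObj n t' < LPObj n t) := by
  have hdrop := LPObj_clearTop_add_le hn ht
  refine ⟨clearTop n t, lpFeasible_clearTop hn ht, clearTop_two_mul, ?_, fun hpos => ?_⟩
  · linarith [ht.1 (2 * n) le_rfl]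
  · linarith
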